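/- There exists a constant c such that for every binary string b: |C(b) − C(b | C(b))| ≤ c. That is, C(b) = C(b|C(b)) + O(1). -/

import Mathlib

/-- Binary strings. -/
abbrev BinStr := List Bool

/-- Standard encoding of a binary string as a natural number. -/
def enc (a : BinStr) : ℕ := Encodable.encode a

/-- A (conditional) machine: it takes a program (a binary string) and a condition
(a natural number, which encodes the conditioning data: a number, a string via `enc`,
or a tuple combined with the standard pairing `Nat.pair`) and possibly outputs a
natural number (encoding the result in the same way). -/
abbrev Machine := BinStr → ℕ →. ℕ

/-- Conditional Kolmogorov complexity of `x` given condition `y`, with respect to the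
machine `U`: the minimal length of a program `p` such that `U p y = x`. -/
noncomputable def cplx (U : Machine) (x y : ℕ) : ℕ :=
  sInf {n | ∃ p : BinStr, p.length = n ∧ x ∈ U p y}

/-- Unconditional Kolmogorov complexity: conditional complexity with the trivial
condition `0`. -/
noncomputable def cplx0 (U : Machine) (x : ℕ) : ℕ := cplx U x 0

/-- `U` is an optimal universal machine for plain complexity: it is partial computable
and simulates every partial computable machine with at most a constant overhead in
program length. -/
def IsOptimal (U : Machine) : Prop :=
  Partrec₂ U ∧
    ∀ V : Machine, Partrec₂ V →
      ∃ c : ℕ, ∀ (p : BinStr) (y x : ℕ), x ∈ V p y →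
        ∃ q : BinStr, q.length ≤ p.length + c ∧ x ∈ U q y

/-- A machine is prefix-free if, for every condition, the set of its halting programs
is prefix-free: no halting program is a proper prefix of another halting program. -/
def PrefixFreeMachine (M : Machine) : Prop :=
  ∀ (y : ℕ) (p q : BinStr), p <+: q → (M p y).Dom → (M q y).Dom → p = q

/-- `U` is an optimal universal prefix-free machine: it is partial computable,
prefix-free, and simulates every partial computable prefix-free machine with at most
a constant overhead in program length. -/
def IsPrefixOptimal (U : Machine) : Prop :=
  Partrec₂ U ∧ PrefixFreeMachine U ∧
    ∀ V : Machine, Partrec₂ V → PrefixFreeMachine V →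
      ∃ c : ℕ, ∀ (p : BinStr) (y x : ℕ), x ∈ V p y →
        ∃ q : BinStr, q.length ≤ p.length + c ∧ x ∈ U q y


/-! A machine may ignore its condition, so `C(b | C(b)) ≤ C(b) + O(1)`. Conversely, let `p` be
a shortest program for `b` given `k = C(b)` and put `d = k - |p|`. Prefixing `p` with a
self-delimiting code of `d` of length `O(√d)` gives an unconditional program for `b` (read off `d`
and `p`, then run `p` on the condition `|p| + d`), so `k ≤ |p| + O(√d)`, that is `d ≤ O(√d)`,
which bounds `d`. -/

theorem cplx_le_length {U : Machine} {x y : ℕ} {p : BinStr} (h : x ∈ U p y) :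
    cplx U x y ≤ p.length :=
  Nat.sInf_le ⟨p, rfl, h⟩

theorem exists_length_eq_cplx_of_mem {U : Machine} {x y : ℕ} {q : BinStr} (h : x ∈ U q y) :
    ∃ p : BinStr, p.length = cplx U x y ∧ x ∈ U p y :=
  Nat.sInf_mem (s := {n | ∃ p : BinStr, p.length = n ∧ x ∈ U p y}) ⟨q.length, q, rfl, h⟩

theorem IsOptimal.exists_cplx_le_add {U : Machine} (hU : IsOptimal U) {V : Machine}
    (hV : Partrec₂ V) :
    ∃ c : ℕ, ∀ (p : BinStr) (y x : ℕ), x ∈ V p y → cplx U x y ≤ p.length + c := by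
  obtain ⟨c, hc⟩ := hU.2 V hV
  refine ⟨c, fun p y x hx => ?_⟩
  obtain ⟨q, hq, hxq⟩ := hc p y x hx
  exact (cplx_le_length hxq).trans hq

theorem IsOptimal.exists_length_eq_cplx {U : Machine} (hU : IsOptimal U) (x y : ℕ) :
    ∃ p : BinStr, p.length = cplx U x y ∧ x ∈ U p y := by
  obtain ⟨_, hc⟩ := hU.2 (fun p _ => Part.some p.length)
    (Computable.list_length.comp Computable.fst).partrec
  obtain ⟨q, -, hq⟩ := hc (List.replicate x true) y x (by simp)
  exact exists_length_eq_cplx_of_mem hq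

theorem IsOptimal.exists_cplx_le_cplx0_add {U : Machine} (hU : IsOptimal U) :
    ∃ c : ℕ, ∀ x y : ℕ, cplx U x y ≤ cplx0 U x + c := by
  obtain ⟨c, hc⟩ := hU.exists_cplx_le_add (V := fun p _ => U p 0)
    (hU.1.comp₂ Primrec.fst.to_comp.to₂ (Primrec₂.const 0).to_comp)
  refine ⟨c, fun x y => ?_⟩
  obtain ⟨p, hp, hxp⟩ := hU.exists_length_eq_cplx x 0
  exact (hc p y x hxp).trans_eq (by rw [hp]; rfl)

def unary (n : ℕ) : BinStr := List.replicate n true ++ [false]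

def readUnary (q : BinStr) : ℕ × BinStr := (q.idxOf false, q.drop (q.idxOf false + 1))

theorem readUnary_unary_append (n : ℕ) (t : BinStr) : readUnary (unary n ++ t) = (n, t) := by
  have hidx : (unary n ++ t).idxOf false = n := by
    induction n with
    | zero => simp [unary]
    | succ n ih => simpa [unary, List.replicate_succ, List.idxOf_cons] using ih
  rw [readUnary, hidx, List.drop_left' (by simp [unary])]

theorem primrec_readUnary : Primrec readUnary :=
  have hidx : Primrec fun q : BinStr => q.idxOf false :=
    Primrec.list_idxOf.comp (Primrec.const false) Primrec.id
  hidx.pair (Primrec.list_drop.comp (Primrec.succ.comp hidx) Primrec.id)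

/-- Writing `d = s² + r` with `s = ⌊√d⌋`, so that `r ≤ 2s`, the code `1ˢ0 1ʳ0` is
self-delimiting and has length `O(√d)`. -/
def natCode (d : ℕ) : BinStr := unary d.sqrt ++ unary (d - d.sqrt * d.sqrt)

def readNat (q : BinStr) : ℕ × BinStr :=
  ((readUnary q).1 * (readUnary q).1 + (readUnary (readUnary q).2).1,
    (readUnary (readUnary q).2).2)

theorem readNat_natCode_append (d : ℕ) (t : BinStr) : readNat (natCode d ++ t) = (d, t) := by
  simp only [readNat, natCode, List.append_assoc, readUnary_unary_append, Prod.mk.injEq,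
    and_true]
  exact Nat.add_sub_of_le (Nat.sqrt_le d)

theorem primrec_readNat : Primrec readNat :=
  have hsnd : Primrec fun q => readUnary (readUnary q).2 :=
    primrec_readUnary.comp (Primrec.snd.comp primrec_readUnary)
  (Primrec.nat_add.comp
    (Primrec.nat_mul.comp (Primrec.fst.comp primrec_readUnary)
      (Primrec.fst.comp primrec_readUnary))
    (Primrec.fst.comp hsnd)).pair (Primrec.snd.comp hsnd)

theorem le_sq_of_le_length_natCode_add {d c : ℕ} (h : d ≤ (natCode d).length + c) :
    d ≤ (c + 3) ^ 2 := by
  have hlen : (natCode d).length = d.sqrt + (d - d.sqrt * d.sqrt) + 2 := by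
    simp only [natCode, unary, List.length_append, List.length_replicate, List.length_singleton]
    omega
  have hsq : d.sqrt * d.sqrt ≤ d := Nat.sqrt_le d
  have hlt : d < (d.sqrt + 1) * (d.sqrt + 1) := Nat.lt_succ_sqrt d
  generalize d.sqrt = s at *
  have hss : s * s ≤ s + (c + 2) := by omega
  have hs : s ≤ c + 2 := by nlinarith
  nlinarith

theorem IsOptimal.exists_cplx0_le_length_natCode_add {U : Machine} (hU : IsOptimal U) :
    ∃ c : ℕ, ∀ (x d : ℕ) (p : BinStr), x ∈ U p (p.length + d) →
      cplx0 U x ≤ (natCode d).length + p.length + c := by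
  have hV : Partrec₂ fun (q : BinStr) (_ : ℕ) =>
      U (readNat q).2 ((readNat q).2.length + (readNat q).1) :=
    hU.1.comp₂ (Primrec.snd.comp (primrec_readNat.comp Primrec.fst)).to_comp.to₂
      (Primrec.nat_add.comp
        (Primrec.list_length.comp (Primrec.snd.comp (primrec_readNat.comp Primrec.fst)))
        (Primrec.fst.comp (primrec_readNat.comp Primrec.fst))).to_comp.to₂
  obtain ⟨c, hc⟩ := hU.exists_cplx_le_add hV
  refine ⟨c, fun x d p hx => ?_⟩
  have := hc (natCode d ++ p) 0 x (by simpa [readNat_natCode_append] using hx)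
  simpa [cplx0, add_assoc] using this

theorem IsOptimal.exists_cplx0_le_cplx_cplx0_add {U : Machine} (hU : IsOptimal U) :
    ∃ c : ℕ, ∀ x : ℕ, cplx0 U x ≤ cplx U x (cplx0 U x) + c := by
  obtain ⟨c, hc⟩ := hU.exists_cplx0_le_length_natCode_add
  refine ⟨(c + 3) ^ 2, fun x => ?_⟩
  obtain ⟨p, hp, hx⟩ := hU.exists_length_eq_cplx x (cplx0 U x)
  rcases le_or_gt (cplx0 U x) p.length with hle | hlt
  · omega
  · set d := cplx0 U x - p.length
    have hd : cplx0 U x = p.length + d := by omega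
    have hcode : d ≤ (natCode d).length + c := by
      have := hc x d p (hd ▸ hx)
      omega
    have := le_sq_of_le_length_natCode_add hcode
    omega

/-- `C(b) = C(b | C(b)) + O(1)`. -/
theorem plain_eq_plain_given_plain (U : Machine) (hU : IsOptimal U) :
    ∃ c : ℕ, ∀ b : BinStr,
      |(cplx0 U (enc b) : ℤ) - (cplx U (enc b) (cplx0 U (enc b)) : ℤ)| ≤ (c : ℤ) := by
  obtain ⟨c₁, hc₁⟩ := hU.exists_cplx_le_cplx0_add
  obtain ⟨c₂, hc₂⟩ := hU.exists_cplx0_le_cplx_cplx0_add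
  refine ⟨c₁ + c₂, fun b => abs_le.2 ⟨?_, ?_⟩⟩
  · have := hc₁ (enc b) (cplx0 U (enc b))
    omega
  · have := hc₂ (enc b)
    omega
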